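/- Let P₀ be a symmetric n×n real matrix and R a symmetric m×m real matrix, and let H₀ be an m×n real matrix such that H₀ P₀ H₀ᵀ + R is invertible. Then the map H ↦ P_p(H) = P₀ − P₀ Hᵀ (H P₀ Hᵀ + R)⁻¹ H P₀ is differentiable at H₀, and for every m×n matrix K its Fréchet derivative is DP_p(H₀)[K] = −P₀ [Kᵀ Σ H₀ + H₀ᵀ Σ K − H₀ᵀ Σ (K P₀ H₀ᵀ + H₀ P₀ Kᵀ) Σ H₀] P₀, where Σ = (H₀ P₀ H₀ᵀ + R)⁻¹. -/

import Mathlib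

/-!
Write `S(H) = H P₀ Hᵀ + R`. The map `H ↦ P₀ - P₀ Hᵀ S(H)⁻¹ H P₀` is built from `H ↦ Hᵀ`,
matrix products and matrix inversion, so its derivative follows from the product rule and the
derivative `T ↦ -A⁻¹ T A⁻¹` of inversion at an invertible `A`, applied to `S`, whose derivative
in direction `K` is `K P₀ Hᵀ + H P₀ Kᵀ`. Expanding the product rule over the five factors gives
the formula.
-/

open Matrix

attribute [local instance]
  Matrix.frobeniusSeminormedAddCommGroup Matrix.frobeniusNormedAddCommGroup
  Matrix.frobeniusIsBoundedSMul Matrix.frobeniusNormedSpace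

namespace Matrix

theorem isBoundedBilinearMap_mul {ι κ ν : Type*} [Fintype ι] [Fintype κ] [Fintype ν] :
    IsBoundedBilinearMap ℝ (fun p : Matrix ι κ ℝ × Matrix κ ν ℝ => p.1 * p.2) where
  add_left := Matrix.add_mul
  smul_left := Matrix.smul_mul
  add_right := Matrix.mul_add
  smul_right r A B := Matrix.mul_smul A r B
  bound := ⟨1, one_pos, fun A B => by simpa using frobenius_norm_mul A B⟩

noncomputable def mulLeftCLM {ι κ ν : Type*} [Fintype κ] [Fintype ν] (A : Matrix ι κ ℝ) :
    Matrix κ ν ℝ →L[ℝ] Matrix ι ν ℝ :=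
  (mulLeftLinearMap ν ℝ A).toContinuousLinearMap

noncomputable def mulRightCLM {ι κ ν : Type*} [Fintype ι] [Fintype κ] (B : Matrix κ ν ℝ) :
    Matrix ι κ ℝ →L[ℝ] Matrix ι ν ℝ :=
  (mulRightLinearMap ι ℝ B).toContinuousLinearMap

noncomputable def transposeCLM (ι κ : Type*) [Fintype ι] [Fintype κ] :
    Matrix ι κ ℝ →L[ℝ] Matrix κ ι ℝ :=
  (transposeLinearEquiv ι κ ℝ ℝ).toLinearMap.toContinuousLinearMap

@[simp]
theorem mulLeftCLM_apply {ι κ ν : Type*} [Fintype κ] [Fintype ν] (A : Matrix ι κ ℝ)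
    (B : Matrix κ ν ℝ) : mulLeftCLM A B = A * B := rfl

@[simp]
theorem mulRightCLM_apply {ι κ ν : Type*} [Fintype ι] [Fintype κ] (A : Matrix ι κ ℝ)
    (B : Matrix κ ν ℝ) : mulRightCLM B A = A * B := rfl

@[simp]
theorem transposeCLM_apply {ι κ : Type*} [Fintype ι] [Fintype κ] (A : Matrix ι κ ℝ) :
    transposeCLM ι κ A = Aᵀ := rfl

end Matrix

section MatrixCalculus

variable {ι κ ν : Type*} [Fintype ι] [Fintype κ] [Fintype ν]
  {X : Type*} [NormedAddCommGroup X] [NormedSpace ℝ X] {x : X}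

theorem HasFDerivAt.matrix_mul {F : X → Matrix ι κ ℝ} {G : X → Matrix κ ν ℝ}
    {F' : X →L[ℝ] Matrix ι κ ℝ} {G' : X →L[ℝ] Matrix κ ν ℝ}
    (hF : HasFDerivAt F F' x) (hG : HasFDerivAt G G' x) :
    HasFDerivAt (fun y => F y * G y)
      ((mulLeftCLM (F x)).comp G' + (mulRightCLM (G x)).comp F') x := by
  have hProduct := (isBoundedBilinearMap_mul.hasFDerivAt (F x, G x)).comp x (hF.prodMk hG)
  exact hProduct.congr_fderiv (ContinuousLinearMap.ext fun _ => rfl)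

theorem HasFDerivAt.matrix_transpose {F : X → Matrix ι κ ℝ} {F' : X →L[ℝ] Matrix ι κ ℝ}
    (hF : HasFDerivAt F F' x) :
    HasFDerivAt (fun y => (F y)ᵀ) ((transposeCLM ι κ).comp F') x :=
  (transposeCLM ι κ).hasFDerivAt.comp x hF

/- `HasFDerivAt.const_sub` would give the same statement, but with the negation of `F'` taken
for the Frobenius-norm topology on matrices rather than the product topology found by instance
search; the two agree only up to unfolding, which blocks `simp` on the derivative. -/
theorem HasFDerivAt.matrix_const_sub {F : X → Matrix ι κ ℝ} {F' : X →L[ℝ] Matrix ι κ ℝ}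
    (A : Matrix ι κ ℝ) (hF : HasFDerivAt F F' x) :
    HasFDerivAt (fun y => A - F y) (-F') x :=
  hF.const_sub A

section Inverse

attribute [local instance] Matrix.frobeniusNormedRing Matrix.frobeniusNormedAlgebra

theorem HasFDerivAt.matrix_inv [DecidableEq ι] {F : X → Matrix ι ι ℝ}
    {F' : X →L[ℝ] Matrix ι ι ℝ} (hF : HasFDerivAt F F' x) (hx : IsUnit (F x)) :
    HasFDerivAt (fun y => (F y)⁻¹)
      (-(mulRightCLM (F x)⁻¹).comp ((mulLeftCLM (F x)⁻¹).comp F')) x := by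
  have hInverse : HasFDerivAt Ring.inverse
      (-ContinuousLinearMap.mulLeftRight ℝ _ (F x)⁻¹ (F x)⁻¹) (F x) := by
    obtain ⟨u, hu⟩ := hx
    rw [← hu, ← coe_units_inv]
    exact hasFDerivAt_ringInverse u
  have hInvComp := (hInverse.comp x hF).congr_fderiv (ContinuousLinearMap.ext fun _ => rfl)
  exact hInvComp.congr_of_eventuallyEq
    (Filter.Eventually.of_forall fun y => nonsing_inv_eq_ringInverse (F y))

end Inverse

end MatrixCalculus

section PosteriorCovariance

variable {ι κ : Type*} [Fintype ι] [Fintype κ] [DecidableEq ι]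
  {X : Type*} [NormedAddCommGroup X] [NormedSpace ℝ X] {x : X}

noncomputable def posteriorCov (P₀ : Matrix κ κ ℝ) (R : Matrix ι ι ℝ) (H : Matrix ι κ ℝ) :
    Matrix κ κ ℝ :=
  P₀ - P₀ * Hᵀ * (H * P₀ * Hᵀ + R)⁻¹ * H * P₀

theorem HasFDerivAt.posteriorCov {F : X → Matrix ι κ ℝ} {F' : X →L[ℝ] Matrix ι κ ℝ}
    (P₀ : Matrix κ κ ℝ) (R : Matrix ι ι ℝ) (hF : HasFDerivAt F F' x)
    (hx : IsUnit (F x * P₀ * (F x)ᵀ + R)) :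
    ∃ L : X →L[ℝ] Matrix κ κ ℝ, HasFDerivAt (fun y => posteriorCov P₀ R (F y)) L x ∧
      ∀ v, L v = -(P₀ * ((F' v)ᵀ * (F x * P₀ * (F x)ᵀ + R)⁻¹ * F x
        + (F x)ᵀ * (F x * P₀ * (F x)ᵀ + R)⁻¹ * F' v
        - (F x)ᵀ * (F x * P₀ * (F x)ᵀ + R)⁻¹ * (F' v * P₀ * (F x)ᵀ + F x * P₀ * (F' v)ᵀ)
          * (F x * P₀ * (F x)ᵀ + R)⁻¹ * F x) * P₀) := by
  have hP₀ := hasFDerivAt_const (𝕜 := ℝ) (x := x) P₀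
  have hT := hF.matrix_transpose
  have hS := (((hF.matrix_mul hP₀).matrix_mul hT).add_const R).matrix_inv hx
  refine ⟨_,
    ((((hP₀.matrix_mul hT).matrix_mul hS).matrix_mul hF).matrix_mul hP₀).matrix_const_sub P₀,
    fun v => ?_⟩
  simp only [_root_.neg_apply, _root_.add_apply, _root_.zero_apply, ContinuousLinearMap.comp_apply,
    mulLeftCLM_apply, mulRightCLM_apply, transposeCLM_apply, Matrix.mul_add, Matrix.add_mul,
    Matrix.mul_sub, Matrix.sub_mul, Matrix.neg_mul, Matrix.mul_neg, Matrix.mul_assoc,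
    Matrix.mul_zero, Matrix.zero_mul, add_zero, zero_add]
  abel

end PosteriorCovariance

theorem stmt_11_general {m n : ℕ}
    (P₀ : Matrix (Fin n) (Fin n) ℝ) (R : Matrix (Fin m) (Fin m) ℝ)
    (H₀ : Matrix (Fin m) (Fin n) ℝ)
    (hinv : IsUnit (H₀ * P₀ * H₀ᵀ + R))
    (Pp : Matrix (Fin m) (Fin n) ℝ → Matrix (Fin n) (Fin n) ℝ)
    (hPp : Pp = fun H => P₀ - P₀ * Hᵀ * (H * P₀ * Hᵀ + R)⁻¹ * H * P₀)
    (Sig : Matrix (Fin m) (Fin m) ℝ) (hSig : Sig = (H₀ * P₀ * H₀ᵀ + R)⁻¹) :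
    ∃ L : Matrix (Fin m) (Fin n) ℝ →L[ℝ] Matrix (Fin n) (Fin n) ℝ,
      HasFDerivAt Pp L H₀ ∧
      ∀ K : Matrix (Fin m) (Fin n) ℝ,
        L K = -(P₀ * (Kᵀ * Sig * H₀ + H₀ᵀ * Sig * K -
          H₀ᵀ * Sig * (K * P₀ * H₀ᵀ + H₀ * P₀ * Kᵀ) * Sig * H₀) * P₀) := by
  subst hPp hSig
  exact (hasFDerivAt_id (𝕜 := ℝ) H₀).posteriorCov P₀ R hinv

/-- Fréchet derivative of the a posteriori covariance map
`P_p(H) = P₀ − P₀ Hᵀ (H P₀ Hᵀ + R)⁻¹ H P₀` at a point `H₀` where `H₀ P₀ H₀ᵀ + R` is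
invertible: for every direction `K`,
`DP_p(H₀)[K] = −P₀ [Kᵀ Σ H₀ + H₀ᵀ Σ K − H₀ᵀ Σ (K P₀ H₀ᵀ + H₀ P₀ Kᵀ) Σ H₀] P₀`,
where `Σ = (H₀ P₀ H₀ᵀ + R)⁻¹`. -/
theorem stmt_11 {m n : ℕ}
    (P₀ : Matrix (Fin n) (Fin n) ℝ) (R : Matrix (Fin m) (Fin m) ℝ)
    (H₀ : Matrix (Fin m) (Fin n) ℝ)
    (hP₀ : P₀.IsSymm) (hR : R.IsSymm) (hinv : IsUnit (H₀ * P₀ * H₀ᵀ + R))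
    (Pp : Matrix (Fin m) (Fin n) ℝ → Matrix (Fin n) (Fin n) ℝ)
    (hPp : Pp = fun H => P₀ - P₀ * Hᵀ * (H * P₀ * Hᵀ + R)⁻¹ * H * P₀)
    (Sig : Matrix (Fin m) (Fin m) ℝ) (hSig : Sig = (H₀ * P₀ * H₀ᵀ + R)⁻¹) :
    ∃ L : Matrix (Fin m) (Fin n) ℝ →L[ℝ] Matrix (Fin n) (Fin n) ℝ,
      HasFDerivAt Pp L H₀ ∧
      ∀ K : Matrix (Fin m) (Fin n) ℝ,
        L K = -(P₀ * (Kᵀ * Sig * H₀ + H₀ᵀ * Sig * K -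
          H₀ᵀ * Sig * (K * P₀ * H₀ᵀ + H₀ * P₀ * Kᵀ) * Sig * H₀) * P₀) :=
  stmt_11_general P₀ R H₀ hinv Pp hPp Sig hSig
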